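/- arXiv:2104.07369 — 2 statements merged into one kernel-verified Lean document; each statement's English description precedes it below -/
import Mathlib

section
/- Let w be a nonempty irreducible packed word. Among all factorizations w = u ▶ φ_I(v) with u, v packed words and I a nonempty set of positions of φ_I(v), there is exactly one in which the length of u is maximal. Moreover, in this factorization, writing I = {i_1 < ⋯ < i_p}: either v = ε and I = {1,…,p}; or, writing v = v_1/⋯/v_r for the factorization of v into irreducible packed words, one has i_1 ≤ |v_1| and (|v| + p) + 1 − i_p ≤ |v_r|. -/
/-- The maximum letter of a word (a list of natural numbers), with `wmax [] = 0`. -/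
def wmax (w : List ℕ) : ℕ := w.foldr max 0

/-- A word over the positive integers is packed if every letter from `1` to its maximum
occurs in it. -/
def IsPacked (w : List ℕ) : Prop :=
  (∀ x ∈ w, 0 < x) ∧ ∀ i : ℕ, 0 < i → i ≤ wmax w → i ∈ w

/-- Shift every letter of `w` by `m`. -/
def shiftW (m : ℕ) (w : List ℕ) : List ℕ := w.map (· + m)

/-- Left-shifted concatenation `u / v`: the letters of `u` are shifted by `max v`. -/
def slash (u v : List ℕ) : List ℕ := shiftW (wmax v) u ++ v

/-- Iterated left-shifted concatenation `w₁ / w₂ / ⋯ / w_k`. -/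
def slashAll (l : List (List ℕ)) : List ℕ := l.foldr slash []

/-- `c` is a global descent of `w` (positions are 1-based, `1 ≤ c ≤ |w| - 1`). -/
def GlobalDescent (w : List ℕ) (c : ℕ) : Prop :=
  1 ≤ c ∧ c + 1 ≤ w.length ∧ ∀ a ∈ w.take c, ∀ b ∈ w.drop c, b < a

/-- A packed word is irreducible if it is nonempty and has no global descent. -/
def Irred (w : List ℕ) : Prop :=
  IsPacked w ∧ w ≠ [] ∧ ∀ c, ¬ GlobalDescent w c

/-- `phi I w` inserts occurrences of the new maximum letter `wmax w + 1` so that they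
end up exactly at the (1-based) positions in `I`. -/
def phi (I : Finset ℕ) (w : List ℕ) : List ℕ :=
  (List.range (w.length + I.card)).map (fun j =>
    if j + 1 ∈ I then wmax w + 1
    else w.getD ((List.range j).countP (fun k => decide (k + 1 ∉ I))) 0)

/-- `Fact6 w (u, I, v)` says that `w = u ▶ φ_I(v)` is a factorization as in Lemma 8
(phi_fact): `u` and `v` are packed, `I` is a nonempty set of positions of `φ_I(v)`,
and `u ▶ φ_I(v) = φ_{I + |u|}(u / v)` equals `w`. -/
def Fact6 (w : List ℕ) (t : List ℕ × Finset ℕ × List ℕ) : Prop :=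
  IsPacked t.1 ∧ IsPacked t.2.2 ∧ t.2.1.Nonempty ∧
  t.2.1 ⊆ Finset.Icc 1 (t.2.2.length + t.2.1.card) ∧
  w = phi (t.2.1.image (· + t.1.length)) (slash t.1 t.2.2)

/-!
The letters of `φ_I(v)` equal to its maximum sit exactly at the positions in `I`, and the other
letters spell `v`; so `w = u ▶ φ_I(v)` determines `I` and `v` once `|u|` is known, hence also `u`.
Since `u = ε` always works and `|u| ≤ |w|`, a factorization with `|u|` maximal exists and is
unique. For it, write `v = v₁ / ⋯ / v_r` with irreducible `v_k`. If every position in `I` came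
after `v₁`, the block `v₁` could be moved into `u`, contradicting maximality. If every position in
`I` came more than `|v_r|` places before the end, then `v_r` would be a suffix of `w` lying below
all the other letters, i.e. a global descent of the irreducible word `w`.
-/

lemma wmax_le_iff {l : List ℕ} {a : ℕ} : wmax l ≤ a ↔ ∀ b ∈ l, b ≤ a := by
  induction l with
  | nil => simp [wmax]
  | cons b l ih => simp [wmax, ← ih]

lemma le_wmax_of_mem {l : List ℕ} {a : ℕ} (h : a ∈ l) : a ≤ wmax l :=
  wmax_le_iff.1 le_rfl a h

lemma wmax_append (a b : List ℕ) : wmax (a ++ b) = max (wmax a) (wmax b) := by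
  induction a with
  | nil => simp [wmax]
  | cons x a ih =>
    simp only [wmax, List.cons_append, List.foldr_cons] at ih ⊢
    rw [ih, max_assoc]

lemma wmax_shiftW {u : List ℕ} (hu : u ≠ []) (m : ℕ) : wmax (shiftW m u) = wmax u + m := by
  induction u with
  | nil => exact absurd rfl hu
  | cons a u ih =>
    rcases eq_or_ne u [] with rfl | hu'
    · simp [shiftW, wmax]
    · simp only [shiftW, List.map_cons, wmax, List.foldr_cons] at ih ⊢
      rw [ih hu', max_add_add_right]

lemma length_slash (u v : List ℕ) : (slash u v).length = u.length + v.length := by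
  simp [slash, shiftW]

lemma nil_slash (v : List ℕ) : slash [] v = v := rfl

lemma slash_nil (u : List ℕ) : slash u [] = u := by
  simp [slash, shiftW, wmax]

lemma wmax_le_wmax_slash (u v : List ℕ) : wmax v ≤ wmax (slash u v) := by
  rw [slash, wmax_append]
  exact le_max_right _ _

lemma wmax_slash {u : List ℕ} (hu : u ≠ []) (v : List ℕ) :
    wmax (slash u v) = wmax u + wmax v := by
  rw [slash, wmax_append, wmax_shiftW hu]
  omega

lemma slash_assoc (a b c : List ℕ) : slash (slash a b) c = slash a (slash b c) := by
  rcases eq_or_ne b [] with rfl | hb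
  · rw [slash_nil, nil_slash]
  · have hmax := wmax_slash hb c
    simp only [slash, shiftW] at hmax ⊢
    simp only [hmax, List.map_append, List.map_map, List.append_assoc]
    congr 2
    ext x
    simp only [Function.comp_apply]
    omega

lemma slashAll_append (l₁ l₂ : List (List ℕ)) :
    slashAll (l₁ ++ l₂) = slash (slashAll l₁) (slashAll l₂) := by
  induction l₁ with
  | nil => rfl
  | cons a l ih =>
    simp only [slashAll, List.foldr_cons, List.foldr_append] at ih ⊢
    rw [ih, slash_assoc]

lemma slashAll_singleton (v : List ℕ) : slashAll [v] = v := slash_nil v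

lemma isPacked_nil : IsPacked [] := ⟨by simp, fun i hi h => by simp [wmax] at h; omega⟩

lemma IsPacked.of_slash {u v : List ℕ} (h : IsPacked (slash u v)) (hu : ∀ x ∈ u, 0 < x) :
    IsPacked u ∧ IsPacked v := by
  have hmem : ∀ i, i ∈ slash u v → i ≤ wmax v → i ∈ v := fun i hi hle => by
    rcases List.mem_append.1 hi with hi | hi
    · obtain ⟨a, ha, rfl⟩ := List.mem_map.1 hi
      have := hu a ha
      omega
    · exact hi
  rcases eq_or_ne u [] with rfl | hne
  · exact ⟨isPacked_nil, h⟩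
  refine ⟨⟨hu, fun i hi hle => ?_⟩, ⟨fun x hx => h.1 x (List.mem_append_right _ hx),
    fun i hi hle => hmem i (h.2 i hi (hle.trans (wmax_le_wmax_slash u v))) hle⟩⟩
  have hiv := h.2 (i + wmax v) (by omega) (by rw [wmax_slash hne]; omega)
  rcases List.mem_append.1 hiv with hiv | hiv
  · obtain ⟨a, ha, hai⟩ := List.mem_map.1 hiv
    rwa [show i = a by omega]
  · have := le_wmax_of_mem hiv
    omega

lemma IsPacked.slash {u v : List ℕ} (hu : IsPacked u) (hv : IsPacked v) :
    IsPacked (slash u v) := by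
  rcases eq_or_ne u [] with rfl | hne
  · exact hv
  refine ⟨fun x hx => ?_, fun i hi hle => ?_⟩
  · rcases List.mem_append.1 hx with hx | hx
    · obtain ⟨a, ha, rfl⟩ := List.mem_map.1 hx
      exact Nat.add_pos_left (hu.1 a ha) _
    · exact hv.1 x hx
  · rw [wmax_slash hne] at hle
    rcases le_or_gt i (wmax v) with h | h
    · exact List.mem_append_right _ (hv.2 i hi h)
    · exact List.mem_append_left _
        (List.mem_map.2 ⟨i - wmax v, hu.2 _ (by omega) (by omega), by omega⟩)

lemma isPacked_slashAll {l : List (List ℕ)} (h : ∀ x ∈ l, IsPacked x) :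
    IsPacked (slashAll l) := by
  induction l with
  | nil => exact isPacked_nil
  | cons a l ih => exact (h a (by simp)).slash (ih fun x hx => h x (by simp [hx]))

/-- A recursive form of `phi` (see `phi_eq_fill`); `0` pads once `x` runs out. -/
def fill (m : ℕ) : List Bool → List ℕ → List ℕ
  | [], _ => []
  | true :: bs, x => m :: fill m bs x
  | false :: bs, x => x.headD 0 :: fill m bs x.tail

section fill

variable (m : ℕ)

@[simp]
lemma length_fill (bs : List Bool) (x : List ℕ) : (fill m bs x).length = bs.length := by
  induction bs generalizing x with
  | nil => rfl
  | cons b bs ih => cases b <;> simp [fill, ih]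

lemma fill_eq_map_range (bs : List Bool) (x : List ℕ) :
    fill m bs x = (List.range bs.length).map
      (fun j => if bs.getD j false then m else x.getD ((bs.take j).count false) 0) := by
  induction bs generalizing x with
  | nil => rfl
  | cons b bs ih =>
    rw [List.length_cons, List.range_succ_eq_map, List.map_cons, List.map_map]
    cases b <;> cases x <;> simp [fill, ih, Function.comp_def]

lemma fill_append {bs : List Bool} {A : List ℕ} (h : bs.count false = A.length)
    (cs : List Bool) (B : List ℕ) : fill m (bs ++ cs) (A ++ B) = fill m bs A ++ fill m cs B := by
  induction bs generalizing A with
  | nil => simp [List.eq_nil_of_length_eq_zero h.symm, fill]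
  | cons b bs ih =>
    cases b
    · rw [List.count_cons_self] at h
      obtain ⟨a, A, rfl⟩ := List.exists_cons_of_length_pos (l := A) (by omega)
      simp_all [fill]
    · simp_all [fill]

lemma fill_replicate_false (x : List ℕ) : fill m (List.replicate x.length false) x = x := by
  induction x with
  | nil => rfl
  | cons a x ih => simp [List.replicate_succ, fill, ih]

lemma fill_map_beq_filter (y : List ℕ) :
    fill m (y.map (· == m)) (y.filter (· != m)) = y := by
  induction y with
  | nil => rfl
  | cons a y ih =>
    by_cases ha : a = m
    · simp [ha, fill, ih]
    · have hb : (a == m) = false := by simpa using ha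
      simp [hb, ha, fill, ih]

lemma mem_fill {bs : List Bool} {x : List ℕ} (h : bs.count false ≤ x.length) {a : ℕ}
    (ha : a ∈ fill m bs x) : a = m ∨ a ∈ x := by
  induction bs generalizing x with
  | nil => simp [fill] at ha
  | cons b bs ih =>
    cases b
    · rw [List.count_cons_self] at h
      obtain ⟨c, x, rfl⟩ := List.exists_cons_of_length_pos (l := x) (by omega)
      simp only [fill, List.headD_cons, List.tail_cons, List.mem_cons] at ha ⊢
      rcases ha with rfl | ha
      · simp
      · have := ih (by simpa using h) ha
        tauto
    · simp only [fill, List.mem_cons] at ha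
      rcases ha with rfl | ha
      · simp
      · exact ih (by simpa using h) ha

lemma self_mem_fill {bs : List Bool} (h : true ∈ bs) (x : List ℕ) : m ∈ fill m bs x := by
  induction bs generalizing x with
  | nil => simp at h
  | cons b bs ih =>
    cases b
    · simp only [fill, List.mem_cons]
      exact Or.inr (ih (by simpa using h) _)
    · simp [fill]

lemma wmax_fill {bs : List Bool} {x : List ℕ} (hbs : true ∈ bs) (hx : ∀ a ∈ x, a ≤ m)
    (h : bs.count false ≤ x.length) : wmax (fill m bs x) = m :=
  le_antisymm (wmax_le_iff.2 fun a ha => (mem_fill m h ha).elim le_of_eq (hx a))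
    (le_wmax_of_mem (self_mem_fill m hbs x))

lemma map_beq_fill {bs : List Bool} {x : List ℕ} (h : bs.count false ≤ x.length)
    (hm : m ∉ x) : (fill m bs x).map (· == m) = bs := by
  induction bs generalizing x with
  | nil => rfl
  | cons b bs ih =>
    cases b
    · rw [List.count_cons_self] at h
      obtain ⟨c, x, rfl⟩ := List.exists_cons_of_length_pos (l := x) (by omega)
      simp only [List.mem_cons, not_or] at hm
      simp [fill, Ne.symm hm.1, ih (by simpa using h) hm.2]
    · simp [fill, ih (by simpa using h) hm]

lemma filter_fill {bs : List Bool} {x : List ℕ} (h : bs.count false = x.length)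
    (hm : m ∉ x) : (fill m bs x).filter (· != m) = x := by
  induction bs generalizing x with
  | nil => simp [List.eq_nil_of_length_eq_zero h.symm, fill]
  | cons b bs ih =>
    cases b
    · rw [List.count_cons_self] at h
      obtain ⟨c, x, rfl⟩ := List.exists_cons_of_length_pos (l := x) (by omega)
      simp only [List.mem_cons, not_or] at hm
      simp [fill, Ne.symm hm.1, ih (by simpa using h) hm.2]
    · simp [fill, ih (by simpa using h) hm]

end fill

/-- Entry `j` (0-based) records whether the 1-based position `j + 1` lies in `J`. -/
def mask (J : Finset ℕ) (n : ℕ) : List Bool := (List.range n).map (fun j => decide (j + 1 ∈ J))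

section mask

variable {J : Finset ℕ} {n : ℕ}

@[simp]
lemma length_mask (J : Finset ℕ) (n : ℕ) : (mask J n).length = n := by simp [mask]

lemma phi_eq_fill (J : Finset ℕ) (x : List ℕ) :
    phi J x = fill (wmax x + 1) (mask J (x.length + J.card)) x := by
  rw [fill_eq_map_range, length_mask, phi]
  refine List.map_congr_left fun j hj => ?_
  have hj : j < x.length + J.card := List.mem_range.1 hj
  have htake : (mask J (x.length + J.card)).take j = mask J j := by
    rw [mask, ← List.map_take, List.take_range, min_eq_left hj.le, mask]
  rw [htake]
  simp [mask, List.getD_eq_getElem?_getD, hj, List.count, List.countP_map, Function.comp_def]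

lemma count_true_mask (hJ : J ⊆ Finset.Icc 1 n) : (mask J n).count true = J.card := by
  have hJ_eq : J = (((List.range n).filter (fun j => j + 1 ∈ J)).map (· + 1)).toFinset := by
    ext a
    simp only [List.mem_toFinset, List.mem_map, List.mem_filter, List.mem_range,
      decide_eq_true_eq]
    constructor
    · intro ha
      have := Finset.mem_Icc.1 (hJ ha)
      exact ⟨a - 1, ⟨by omega, by rwa [Nat.sub_add_cancel this.1]⟩, by omega⟩
    · rintro ⟨j, ⟨-, hj⟩, rfl⟩
      exact hj
  conv_rhs => rw [hJ_eq]
  rw [List.toFinset_card_of_nodup ((List.nodup_range.filter _).map (add_left_injective 1))]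
  simp [mask, List.count, List.countP_eq_length_filter, List.filter_map, Function.comp_def]

lemma count_false_mask {k : ℕ} (hJ : J ⊆ Finset.Icc 1 (k + J.card)) :
    (mask J (k + J.card)).count false = k := by
  have := List.count_true_add_count_false (mask J (k + J.card))
  rw [count_true_mask hJ, length_mask] at this
  omega

lemma true_mem_mask (hne : J.Nonempty) (hJ : J ⊆ Finset.Icc 1 n) : true ∈ mask J n := by
  obtain ⟨j, hj⟩ := hne
  have := Finset.mem_Icc.1 (hJ hj)
  exact List.mem_map.2 ⟨j - 1, List.mem_range.2 (by omega), by simpa [Nat.sub_add_cancel this.1]⟩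

lemma mask_add (J : Finset ℕ) (a b : ℕ) :
    mask J (a + b) = mask J a ++ (List.range b).map (fun j => decide (a + j + 1 ∈ J)) := by
  simp [mask, List.range_add, Function.comp_def]

lemma mask_add_of_forall_le {a : ℕ} (h : ∀ j ∈ J, j ≤ a) (b : ℕ) :
    mask J (a + b) = mask J a ++ List.replicate b false := by
  rw [mask_add]
  refine congrArg _ (List.eq_replicate_iff.2 ⟨by simp, ?_⟩)
  simp only [List.mem_map, List.mem_range]
  rintro _ ⟨j, -, rfl⟩
  simp only [decide_eq_false_iff_not]
  intro hj
  have := h _ hj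
  omega

lemma mask_image_add {I : Finset ℕ} (hI : 0 ∉ I) (k n : ℕ) :
    mask (I.image (· + k)) (k + n) = List.replicate k false ++ mask I n := by
  rw [mask_add]
  congr 1
  · refine List.eq_replicate_iff.2 ⟨by simp, ?_⟩
    simp only [mask, List.mem_map, List.mem_range]
    rintro _ ⟨j, hj, rfl⟩
    simp only [Finset.mem_image, decide_eq_false_iff_not]
    rintro ⟨i, hi, hij⟩
    have : i ≠ 0 := fun h => hI (h ▸ hi)
    omega
  · refine List.map_congr_left fun j _ => ?_
    simp only [Finset.mem_image, decide_eq_decide]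
    exact ⟨fun ⟨i, hi, hij⟩ => by rwa [show j + 1 = i by omega], fun h => ⟨j + 1, h, by omega⟩⟩

lemma mask_injective {J' : Finset ℕ} (hJ : J ⊆ Finset.Icc 1 n) (hJ' : J' ⊆ Finset.Icc 1 n)
    (h : mask J n = mask J' n) : J = J' := by
  have key : ∀ K : Finset ℕ, ∀ j, 1 ≤ j → j ≤ n → (j ∈ K ↔ (mask K n)[j - 1]? = some true) := by
    intro K j hj1 hjn
    simp [mask, show j - 1 < n by omega, Nat.sub_add_cancel hj1]
  ext j
  by_cases hj : 1 ≤ j ∧ j ≤ n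
  · rw [key J j hj.1 hj.2, key J' j hj.1 hj.2, h]
  · exact iff_of_false (fun h' => hj (Finset.mem_Icc.1 (hJ h')))
      (fun h' => hj (Finset.mem_Icc.1 (hJ' h')))

end mask

section Fact6

variable {w u v : List ℕ} {I : Finset ℕ}

lemma Fact6.eq_append (h : Fact6 w (u, I, v)) :
    w = shiftW (wmax v) u ++ fill (wmax (slash u v) + 1) (mask I (v.length + I.card)) v := by
  obtain ⟨-, -, -, hI, rfl⟩ := h
  have h0 : 0 ∉ I := fun h0 => by simpa using hI h0
  have hu : (shiftW (wmax v) u).length = u.length := by simp [shiftW]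
  have key := fill_append (wmax (slash u v) + 1) (bs := List.replicate u.length false)
    (A := shiftW (wmax v) u) (by simp [hu]) (mask I (v.length + I.card)) v
  rw [← hu, fill_replicate_false] at key
  rw [phi_eq_fill, Finset.card_image_of_injective _ (add_left_injective _), length_slash,
    add_assoc, mask_image_add h0, ← hu]
  exact key

lemma Fact6.wmax_eq (h : Fact6 w (u, I, v)) : wmax w = wmax (slash u v) + 1 := by
  have ⟨_, _, hne, hI, _⟩ := h
  rw [h.eq_append, wmax_append, wmax_fill _ (true_mem_mask hne hI)
    (fun a ha => (le_wmax_of_mem ha).trans ((wmax_le_wmax_slash u v).trans (Nat.le_succ _)))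
    (count_false_mask hI).le]
  have : wmax (shiftW (wmax v) u) ≤ wmax (slash u v) := by
    rw [slash, wmax_append]
    exact le_max_left _ _
  omega

lemma Fact6.wmax_notMem (h : Fact6 w (u, I, v)) : wmax w ∉ v := fun hm => by
  have := le_wmax_of_mem hm
  have := wmax_le_wmax_slash u v
  have := h.wmax_eq
  omega

lemma Fact6.eq_of_length_eq {u' v' : List ℕ} {I' : Finset ℕ} (h : Fact6 w (u, I, v))
    (h' : Fact6 w (u', I', v')) (hl : u.length = u'.length) : (u, I, v) = (u', I', v') := by
  have ⟨_, _, _, hI, _⟩ := h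
  have ⟨_, _, _, hI', _⟩ := h'
  have e := h.eq_append
  have e' := h'.eq_append
  rw [← h.wmax_eq] at e
  rw [← h'.wmax_eq] at e'
  have hu : (shiftW (wmax v) u).length = (shiftW (wmax v') u').length := by simp [shiftW, hl]
  obtain ⟨hhead, htail⟩ := List.append_inj (e.symm.trans e') hu
  have hcount : (mask I (v.length + I.card)).count false = v.length := count_false_mask hI
  have hcount' : (mask I' (v'.length + I'.card)).count false = v'.length := count_false_mask hI'
  have hmask : mask I (v.length + I.card) = mask I' (v'.length + I'.card) := by
    rw [← map_beq_fill _ hcount.le h.wmax_notMem, htail, map_beq_fill _ hcount'.le h'.wmax_notMem]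
  have hn : v.length + I.card = v'.length + I'.card := by
    simpa using congrArg List.length hmask
  have hII : I = I' := mask_injective hI (hn ▸ hI') (hn ▸ hmask)
  have hvv : v = v' := by
    rw [← filter_fill _ hcount h.wmax_notMem, htail, filter_fill _ hcount' h'.wmax_notMem]
  subst hII hvv
  rw [List.map_injective_iff.2 (add_left_injective (wmax v)) hhead]

lemma Fact6.length_le {t : List ℕ × Finset ℕ × List ℕ} (h : Fact6 w t) : t.1.length ≤ w.length := by
  have := congrArg List.length h.2.2.2.2
  rw [phi_eq_fill, length_fill, length_mask, length_slash] at this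
  omega

end Fact6

lemma IsPacked.wmax_filter_ne_add_one {w : List ℕ} (hw : IsPacked w) (hne : w ≠ []) :
    wmax (w.filter (· != wmax w)) + 1 = wmax w := by
  have hmem : ∀ a, a ∈ w.filter (· != wmax w) ↔ a ∈ w ∧ a ≠ wmax w := by simp
  obtain ⟨b, hb⟩ := List.exists_mem_of_ne_nil w hne
  have hpos : 1 ≤ wmax w := (hw.1 b hb).trans_le (le_wmax_of_mem hb)
  have hle : wmax (w.filter (· != wmax w)) ≤ wmax w - 1 := wmax_le_iff.2 fun a ha => by
    have := (hmem a).1 ha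
    have := le_wmax_of_mem this.1
    omega
  rcases eq_or_lt_of_le hpos with h1 | h1
  · omega
  · have := le_wmax_of_mem ((hmem _).2 ⟨hw.2 (wmax w - 1) (by omega) (by omega), by omega⟩)
    omega

lemma exists_fact6_nil {w : List ℕ} (hw : IsPacked w) (hne : w ≠ []) :
    ∃ I v, Fact6 w ([], I, v) := by
  set M := wmax w
  set x := w.filter (· != M)
  set P := (Finset.Icc 1 w.length).filter (fun j => w[j - 1]? = some M)
  have hPsub : P ⊆ Finset.Icc 1 w.length := Finset.filter_subset _ _
  have hmask : mask P w.length = w.map (· == M) := by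
    refine List.ext_getElem (by simp) fun j hj _ => ?_
    have hj : j < w.length := by simpa using hj
    simp [mask, P, hj, Bool.beq_eq_decide_eq]
  have hlen : x.length + P.card = w.length := by
    have hx : x.length = (w.map (· == M)).count false := by
      simp only [x, List.count, List.countP_eq_length_filter, List.filter_map, List.length_map]
      congr 2
      funext a
      simp only [Function.comp_apply, bne]
      cases a == M <;> rfl
    rw [hx, ← count_true_mask hPsub, hmask, add_comm, List.count_true_add_count_false,
      List.length_map]
  have hxmax : wmax x + 1 = M := hw.wmax_filter_ne_add_one hne
  refine ⟨P, x, isPacked_nil, ⟨fun a ha => hw.1 a (List.mem_filter.1 ha).1, fun i hi hle => ?_⟩,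
    ?_, hlen ▸ hPsub, ?_⟩
  · change i ≤ wmax x at hle
    exact List.mem_filter.2 ⟨hw.2 i hi (by omega), by simp; omega⟩
  · obtain ⟨b, hb⟩ := List.exists_mem_of_ne_nil w hne
    obtain ⟨j, hj, hjM⟩ :=
      List.getElem_of_mem (hw.2 M ((hw.1 b hb).trans_le (le_wmax_of_mem hb)) le_rfl)
    exact ⟨j + 1, by simp [P, hj, hjM]⟩
  · simp only [List.length_nil, add_zero, Finset.image_id', nil_slash]
    rw [phi_eq_fill, hxmax, hlen, hmask]
    exact (fill_map_beq_filter M w).symm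

theorem existsUnique_maximal_fact6 {w : List ℕ} (hw : IsPacked w) (hne : w ≠ []) :
    ∃! t : List ℕ × Finset ℕ × List ℕ,
      Fact6 w t ∧ ∀ t', Fact6 w t' → t'.1.length ≤ t.1.length := by
  classical
  set Q : ℕ → Prop := fun k => ∃ t, Fact6 w t ∧ t.1.length = k
  obtain ⟨I, v, h0⟩ := exists_fact6_nil hw hne
  obtain ⟨t₀, ht₀, htl⟩ : Q (Nat.findGreatest Q w.length) :=
    Nat.findGreatest_spec (Nat.zero_le _) ⟨_, h0, rfl⟩
  have hmax : ∀ t', Fact6 w t' → t'.1.length ≤ t₀.1.length := fun t' ht' =>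
    htl ▸ Nat.le_findGreatest ht'.length_le ⟨t', ht', rfl⟩
  refine ⟨t₀, ⟨ht₀, hmax⟩, fun t ⟨ht, hmax'⟩ => ?_⟩
  exact ht.eq_of_length_eq ht₀ (le_antisymm (hmax _ ht) (hmax' _ ht₀))

lemma globalDescent_append {p s : List ℕ} (hp : p ≠ []) (hs : s ≠ [])
    (h : ∀ a ∈ p, ∀ b ∈ s, b < a) : GlobalDescent (p ++ s) p.length := by
  refine ⟨List.length_pos_iff.2 hp, ?_, ?_⟩
  · have := List.length_pos_iff.2 hs
    simp only [List.length_append]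
    omega
  · simpa using h

lemma GlobalDescent.exists_eq_slash {v : List ℕ} {c : ℕ} (hv : IsPacked v)
    (hc : GlobalDescent v c) :
    ∃ a b, a ≠ [] ∧ b ≠ [] ∧ IsPacked a ∧ IsPacked b ∧ v = slash a b := by
  obtain ⟨hc1, hc2, hlt⟩ := hc
  set m := wmax (v.drop c)
  have hm : ∀ a ∈ v.take c, m < a := fun a ha => by
    have := wmax_le_iff.2 fun b hb => Nat.le_sub_one_of_lt (hlt a ha b hb)
    have := hv.1 a (List.mem_of_mem_take ha)
    omega
  have hshift : shiftW m ((v.take c).map (· - m)) = v.take c := by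
    rw [shiftW, List.map_map]
    refine (List.map_congr_left fun a ha => ?_).trans (List.map_id _)
    have := hm a ha
    simp only [Function.comp_apply, id]
    omega
  have heq : v = slash ((v.take c).map (· - m)) (v.drop c) := by
    rw [slash, hshift, List.take_append_drop]
  have hpos : ∀ a ∈ (v.take c).map (· - m), 0 < a := by
    simp only [List.mem_map]
    rintro _ ⟨a, ha, rfl⟩
    have := hm a ha
    omega
  obtain ⟨hpa, hpb⟩ := IsPacked.of_slash (heq ▸ hv) hpos
  exact ⟨_, _, List.ne_nil_of_length_pos (by simp; omega),
    List.ne_nil_of_length_pos (by simp; omega), hpa, hpb, heq⟩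

lemma exists_irred_slashAll {v : List ℕ} (hv : IsPacked v) (hne : v ≠ []) :
    ∃ l : List (List ℕ), l ≠ [] ∧ (∀ x ∈ l, Irred x) ∧ v = slashAll l := by
  induction hn : v.length using Nat.strong_induction_on generalizing v with
  | _ n ih =>
    rcases em (∃ c, GlobalDescent v c) with ⟨c, hc⟩ | hirr
    · obtain ⟨a, b, ha, hb, hpa, hpb, rfl⟩ := hc.exists_eq_slash hv
      have hlen := length_slash a b
      have ha' := List.length_pos_iff.2 ha
      have hb' := List.length_pos_iff.2 hb
      obtain ⟨la, hla, hla_irr, rfl⟩ := ih a.length (by omega) hpa ha rfl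
      obtain ⟨lb, -, hlb_irr, rfl⟩ := ih b.length (by omega) hpb hb rfl
      refine ⟨la ++ lb, by simp [hla], fun x hx => ?_, (slashAll_append la lb).symm⟩
      rcases List.mem_append.1 hx with hx | hx
      exacts [hla_irr x hx, hlb_irr x hx]
    · exact ⟨[v], by simp, by simpa using ⟨hv, hne, not_exists.1 hirr⟩,
        (slashAll_singleton v).symm⟩

section maximal

variable {w u : List ℕ} {I : Finset ℕ}

lemma Fact6.slash_left {v₁ v₂ : List ℕ} (h : Fact6 w (u, I, slash v₁ v₂)) (hv₁ : IsPacked v₁)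
    (hv₂ : IsPacked v₂) (hI : ∀ j ∈ I, v₁.length < j) :
    Fact6 w (slash u v₁, I.image (· - v₁.length), v₂) := by
  obtain ⟨hu, -, hne, hIsub, heq⟩ := h
  dsimp only at hu hne hIsub heq ⊢
  have hcard : (I.image (· - v₁.length)).card = I.card :=
    Finset.card_image_of_injOn fun a ha b hb hab => by
      have := hI a ha
      have := hI b hb
      have : a - v₁.length = b - v₁.length := hab
      omega
  refine ⟨hu.slash hv₁, hv₂, hne.image _, fun j hj => ?_, ?_⟩
  · obtain ⟨a, ha, rfl⟩ := Finset.mem_image.1 hj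
    have ha₁ := Finset.mem_Icc.1 (hIsub ha)
    have ha₂ := hI a ha
    rw [length_slash] at ha₁
    dsimp only
    rw [hcard, Finset.mem_Icc]
    omega
  · rw [slash_assoc, Finset.image_image, heq, length_slash]
    congr 1
    refine Finset.image_congr fun a ha => ?_
    have := hI a ha
    simp only [Function.comp_apply]
    omega

lemma exists_mem_le_length_of_maximal {v₁ v₂ : List ℕ} (h : Fact6 w (u, I, slash v₁ v₂))
    (hmax : ∀ t, Fact6 w t → t.1.length ≤ u.length) (hv₁ : IsPacked v₁) (hne : v₁ ≠ [])
    (hv₂ : IsPacked v₂) : ∃ j ∈ I, j ≤ v₁.length := by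
  by_contra! hI
  have hlen := hmax _ (h.slash_left hv₁ hv₂ hI)
  rw [length_slash] at hlen
  have := List.length_pos_iff.2 hne
  omega

lemma Fact6.globalDescent {y z : List ℕ} (h : Fact6 w (u, I, slash y z)) (hy : IsPacked y)
    (hz : z ≠ []) (hI : ∀ j ∈ I, j + z.length ≤ (slash y z).length + I.card) :
    GlobalDescent w (w.length - z.length) := by
  have ⟨hu, _, hne, hIsub, _⟩ := h
  dsimp only at hu hne hIsub
  have hIc : I ⊆ Finset.Icc 1 (y.length + I.card) := fun j hj => by
    have := Finset.mem_Icc.1 (hIsub hj)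
    have := hI j hj
    rw [length_slash] at this
    exact Finset.mem_Icc.2 ⟨by omega, by omega⟩
  have hmask : mask I ((slash y z).length + I.card) =
      mask I (y.length + I.card) ++ List.replicate z.length false := by
    rw [length_slash, add_right_comm]
    exact mask_add_of_forall_le (fun j hj => (Finset.mem_Icc.1 (hIc hj)).2) _
  have hcount : (mask I (y.length + I.card)).count false = (shiftW (wmax z) y).length := by
    rw [count_false_mask hIc]
    simp [shiftW]
  have hsplit (m : ℕ) : fill m (mask I ((slash y z).length + I.card)) (slash y z) =
      fill m (mask I (y.length + I.card)) (shiftW (wmax z) y) ++ z := by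
    rw [hmask]
    exact (fill_append m hcount _ z).trans (by rw [fill_replicate_false])
  set p := shiftW (wmax (slash y z)) u ++
    fill (wmax (slash u (slash y z)) + 1) (mask I (y.length + I.card)) (shiftW (wmax z) y)
  have hw : w = p ++ z := by rw [h.eq_append, hsplit, List.append_assoc]
  have hp : p ≠ [] := List.ne_nil_of_length_pos <| by
    have := Finset.card_pos.2 hne
    simp only [p, List.length_append, length_fill, length_mask]
    omega
  have hzw : wmax z ≤ wmax (slash u (slash y z)) :=
    (wmax_le_wmax_slash y z).trans (wmax_le_wmax_slash u _)
  rw [hw, List.length_append, Nat.add_sub_cancel]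
  refine globalDescent_append hp hz fun a ha b hb => (le_wmax_of_mem hb).trans_lt ?_
  rcases List.mem_append.1 ha with ha | ha
  · obtain ⟨c, hc, rfl⟩ := List.mem_map.1 ha
    have := hu.1 c hc
    have := wmax_le_wmax_slash y z
    omega
  · rcases mem_fill _ hcount.le ha with rfl | ha
    · omega
    · obtain ⟨c, hc, rfl⟩ := List.mem_map.1 ha
      have := hy.1 c hc
      omega

lemma exists_mem_lt_add_length {y z : List ℕ} (hw : Irred w) (h : Fact6 w (u, I, slash y z))
    (hy : IsPacked y) (hz : z ≠ []) : ∃ j ∈ I, (slash y z).length + I.card < j + z.length := by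
  by_contra! hI
  exact hw.2.2 _ (h.globalDescent hy hz hI)

end maximal

theorem unique_maximal_phi_factorization (w : List ℕ) (hw : Irred w) :
    (∃! t : List ℕ × Finset ℕ × List ℕ,
        Fact6 w t ∧ ∀ t', Fact6 w t' → t'.1.length ≤ t.1.length) ∧
    (∀ u : List ℕ, ∀ I : Finset ℕ, ∀ v : List ℕ,
      Fact6 w (u, I, v) → (∀ t', Fact6 w t' → t'.1.length ≤ u.length) →
      ((v = [] ∧ I = Finset.Icc 1 I.card) ∨
       (∃ l : List (List ℕ), l ≠ [] ∧ (∀ x ∈ l, Irred x) ∧ v = slashAll l ∧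
        ∃ i₁ ∈ I, ∃ iₚ ∈ I, (∀ j ∈ I, i₁ ≤ j ∧ j ≤ iₚ) ∧
          i₁ ≤ l.headI.length ∧
          v.length + I.card + 1 - iₚ ≤ l.getLastI.length))) := by
  refine ⟨existsUnique_maximal_fact6 hw.1 hw.2.1, fun u I v hf hmax => ?_⟩
  have ⟨_, hv, hne, hI, _⟩ := hf
  rcases eq_or_ne v [] with rfl | hv₀
  · exact Or.inl ⟨rfl, Finset.eq_of_subset_of_card_le (by simpa using hI) (by simp)⟩
  obtain ⟨l, hl, hirr, rfl⟩ := exists_irred_slashAll hv hv₀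
  have hpacked : ∀ l' ⊆ l, IsPacked (slashAll l') := fun l' hl' =>
    isPacked_slashAll fun x hx => (hirr x (hl' hx)).1
  refine Or.inr ⟨l, hl, hirr, rfl, I.min' hne, I.min'_mem hne, I.max' hne, I.max'_mem hne,
    fun j hj => ⟨I.min'_le j hj, I.le_max' j hj⟩, ?_, ?_⟩
  · obtain ⟨v₁, l', rfl⟩ := List.exists_cons_of_ne_nil hl
    obtain ⟨j, hj, hjle⟩ := exists_mem_le_length_of_maximal hf hmax (hirr v₁ (by simp)).1
      (hirr v₁ (by simp)).2.1 (hpacked l' (List.subset_cons_self _ _))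
    exact (I.min'_le j hj).trans hjle
  · obtain ⟨L, z, rfl⟩ := (List.eq_nil_or_concat' l).resolve_left hl
    rw [slashAll_append, slashAll_singleton] at hf ⊢
    obtain ⟨j, hj, hlt⟩ := exists_mem_lt_add_length hw hf (hpacked L (by simp))
      (hirr z (by simp)).2.1
    have := I.le_max' j hj
    simp only [List.getLastI_eq_getLast?_getD, List.getLast?_concat, Option.getD_some]
    omega
end

section
/- For every finite nonempty set I of positive integers, Δ_≺ ∘ τ_I = (τ_I ⊗ id) ∘ Δ_≺ as linear maps WQSym_+ → WQSym_+ ⊗ WQSym_+. Moreover, τ_I maps TPrim into TPrim: if x ∈ Ker Δ_≺ ∩ Ker Δ_≻, then τ_I(x) ∈ Ker Δ_≺ ∩ Ker Δ_≻. -/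
open scoped TensorProduct Classical

/-- `pack w` replaces every occurrence of the `i`-th smallest distinct letter of `w` by `i`. -/
def pack (w : List ℕ) : List ℕ :=
  w.map (fun a => (w.dedup.filter (fun b => b < a)).length + 1)

/-- The ambient free `ℚ`-vector space on all words. -/
abbrev V : Type := List ℕ →₀ ℚ

noncomputable instance : Zero (V ⊗[ℚ] V) :=
  (inferInstance : AddZeroClass (V ⊗[ℚ] V)).toZero

/-- The basis element `R_w`. -/
noncomputable def Rw (w : List ℕ) : V := Finsupp.single w 1

/-- `WQSym₊`: the span of the `R_w` over nonempty packed words `w`. -/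
noncomputable def Wplus : Submodule ℚ V :=
  Submodule.span ℚ {x : V | ∃ w : List ℕ, IsPacked w ∧ w ≠ [] ∧ x = Rw w}

/-- A valid cut for `Δ_≺` at position `i`: `1 ≤ i ≤ |w| - 1`, the letter sets of the two
factors are disjoint, and all occurrences of the maximum letter lie in the first `i`
positions. -/
def okL (w : List ℕ) (i : ℕ) : Prop :=
  1 ≤ i ∧ i < w.length ∧ (∀ a ∈ w.take i, a ∉ w.drop i) ∧ wmax w ∉ w.drop i

/-- A valid cut for `Δ_≻` at position `i`: `1 ≤ i ≤ |w| - 1`, the letter sets of the two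
factors are disjoint, and all occurrences of the maximum letter lie in the last `n - i`
positions. -/
def okR (w : List ℕ) (i : ℕ) : Prop :=
  1 ≤ i ∧ i < w.length ∧ (∀ a ∈ w.take i, a ∉ w.drop i) ∧ wmax w ∉ w.take i

noncomputable def cutsL (w : List ℕ) : V ⊗[ℚ] V :=
  ((((List.range w.length).filter (fun i => decide (okL w i))).map
    (fun i => Rw (pack (w.take i)) ⊗ₜ[ℚ] Rw (pack (w.drop i)))) : List (V ⊗[ℚ] V)).sum

noncomputable def cutsR (w : List ℕ) : V ⊗[ℚ] V :=
  ((((List.range w.length).filter (fun i => decide (okR w i))).map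
    (fun i => Rw (pack (w.take i)) ⊗ₜ[ℚ] Rw (pack (w.drop i)))) : List (V ⊗[ℚ] V)).sum

/-- The left half-coproduct `Δ_≺` of `WQSym₊`. -/
noncomputable def deltaL : V →ₗ[ℚ] V ⊗[ℚ] V :=
  Finsupp.lsum ℚ fun w => LinearMap.toSpanSingleton ℚ (V ⊗[ℚ] V) (cutsL w)

/-- The right half-coproduct `Δ_≻` of `WQSym₊`. -/
noncomputable def deltaR : V →ₗ[ℚ] V ⊗[ℚ] V :=
  Finsupp.lsum ℚ fun w => LinearMap.toSpanSingleton ℚ (V ⊗[ℚ] V) (cutsR w)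

/-- The maximal letter of `w` occurs exactly at the (1-based) positions belonging to `I`. -/
def maxAt (w : List ℕ) (I : Finset ℕ) : Prop :=
  (∀ i ∈ I, 1 ≤ i ∧ i ≤ w.length) ∧
  ∀ j, j < w.length → (w.getD j 0 = wmax w ↔ j + 1 ∈ I)

/-- The projector `τ_I`: on a basis element `R_w`, it is `R_w` when the maximal letter
of `w` occurs exactly at the positions of `I`, and `0` otherwise. -/
noncomputable def tauI (I : Finset ℕ) : V →ₗ[ℚ] V :=
  Finsupp.lsum ℚ fun w => LinearMap.toSpanSingleton ℚ V
    (if maxAt w I then Rw w else 0)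

/-- The totally primitive elements of `WQSym₊`: `TPrim = Ker Δ_≺ ∩ Ker Δ_≻`. -/
noncomputable def TPrim : Submodule ℚ V :=
  Wplus ⊓ LinearMap.ker deltaL ⊓ LinearMap.ker deltaR

/-!
Both half-coproducts cut a word only where its letter sets separate, and `pack` does not move
the maximal letters. A `Δ_≺` cut keeps every maximal letter of `w` in the left factor, at the
same positions, so `τ_I` may be applied to the left factor instead. A `Δ_≻` cut keeps them in
the right factor, shifted by the length of the left one; hence `Δ_≻ ∘ τ_I` equals `Δ_≻` followed
by the projector of the tensor square that keeps `R_u ⊗ R_v` when the maximal letters of `v`,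
shifted by `|u|`, sit at `I`. Both identities send kernels of the half-coproducts to themselves.
-/

open Finset

section Letters

variable {u v w : List ℕ} {a m : ℕ}

lemma le_wmax (h : a ∈ w) : a ≤ wmax w := List.le_max_of_le h le_rfl

lemma wmax_le (h : ∀ a ∈ w, a ≤ m) : wmax w ≤ m := List.max_le_of_forall_le w m h

lemma wmax_mem (h : w ≠ []) : wmax w ∈ w :=
  List.maximum_mem (List.foldr_max_of_ne_nil h).symm

lemma wmax_append_of_not_mem_right (h : wmax (u ++ v) ∉ v) : wmax u = wmax (u ++ v) := by
  refine le_antisymm (wmax_le fun a ha => le_wmax (List.mem_append_left v ha)) ?_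
  rcases eq_or_ne (u ++ v) [] with huv | huv
  · simp [huv, wmax]
  · exact le_wmax ((List.mem_append.mp (wmax_mem huv)).resolve_right h)

lemma wmax_append_of_not_mem_left (h : wmax (u ++ v) ∉ u) : wmax v = wmax (u ++ v) := by
  refine le_antisymm (wmax_le fun a ha => le_wmax (List.mem_append_right u ha)) ?_
  rcases eq_or_ne (u ++ v) [] with huv | huv
  · simp [huv, wmax]
  · exact le_wmax ((List.mem_append.mp (wmax_mem huv)).resolve_left h)

lemma getD_mem {j : ℕ} (h : j < w.length) : w.getD j 0 ∈ w := by
  rw [List.getD_eq_getElem _ _ h]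
  exact List.getElem_mem h

def maxIndices (w : List ℕ) : Finset ℕ :=
  {j ∈ range w.length | w.getD j 0 = wmax w}

@[simp]
lemma mem_maxIndices {j : ℕ} : j ∈ maxIndices w ↔ j < w.length ∧ w.getD j 0 = wmax w := by
  simp [maxIndices]

lemma maxAt_iff {I : Finset ℕ} : maxAt w I ↔ (maxIndices w).image (· + 1) = I := by
  constructor
  · rintro ⟨hI, hmax⟩
    ext k
    simp only [mem_image, mem_maxIndices]
    constructor
    · rintro ⟨j, ⟨hj, hjmax⟩, rfl⟩
      exact (hmax j hj).mp hjmax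
    · intro hk
      obtain ⟨hk1, hkn⟩ := hI k hk
      refine ⟨k - 1, ⟨by omega, (hmax (k - 1) (by omega)).mpr ?_⟩, by omega⟩
      rwa [Nat.sub_add_cancel hk1]
  · rintro rfl
    refine ⟨?_, fun j hj => ?_⟩
    · simp only [mem_image, mem_maxIndices]
      rintro _ ⟨j, ⟨hj, -⟩, rfl⟩
      omega
    · simp [hj]

lemma maxIndices_append_left (h : wmax (u ++ v) ∉ v) : maxIndices (u ++ v) = maxIndices u := by
  have hmax_u := wmax_append_of_not_mem_right h
  ext j
  simp only [mem_maxIndices, List.length_append, ← hmax_u]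
  by_cases hj : j < u.length
  · rw [List.getD_append _ _ _ _ hj]
    omega
  · have hv : j < u.length + v.length → (u ++ v).getD j 0 ∈ v := fun hj' => by
      rw [List.getD_append_right _ _ _ _ (by omega)]
      exact getD_mem (by omega)
    exact iff_of_false (fun ⟨hj', hmax⟩ => h (by rw [← hmax_u, ← hmax]; exact hv hj'))
      fun ⟨hj', _⟩ => hj hj'

lemma maxIndices_append_right (h : wmax (u ++ v) ∉ u) :
    maxIndices (u ++ v) = (maxIndices v).image (· + u.length) := by
  have hmax_v := wmax_append_of_not_mem_left h
  ext j
  simp only [mem_image, mem_maxIndices, List.length_append, ← hmax_v]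
  by_cases hj : j < u.length
  · rw [List.getD_append _ _ _ _ hj]
    refine iff_of_false (fun ⟨_, hmax⟩ => h (by rw [← hmax_v, ← hmax]; exact getD_mem hj)) ?_
    rintro ⟨k, -, rfl⟩
    omega
  · rw [List.getD_append_right _ _ _ _ (by omega)]
    constructor
    · rintro ⟨hj', hmax⟩
      exact ⟨j - u.length, ⟨by omega, hmax⟩, by omega⟩
    · rintro ⟨k, ⟨hk, hmax⟩, rfl⟩
      exact ⟨by omega, by rwa [Nat.add_sub_cancel]⟩

end Letters

section Pack

variable {w : List ℕ} {a b : ℕ}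

def packRank (w : List ℕ) (a : ℕ) : ℕ := #{b ∈ w.toFinset | b < a} + 1

lemma pack_eq_map_packRank (w : List ℕ) : pack w = w.map (packRank w) := rfl

lemma packRank_mono : Monotone (packRank w) := fun _ _ hab =>
  Nat.add_le_add_right (card_le_card (monotone_filter_right _ fun _ _ h => h.trans_le hab)) 1

lemma packRank_lt_packRank (ha : a ∈ w) (hab : a < b) : packRank w a < packRank w b := by
  refine Nat.add_lt_add_right (card_lt_card ?_) 1
  refine (ssubset_iff_of_subset (monotone_filter_right _ fun _ _ h => h.trans hab)).mpr ?_
  exact ⟨a, by simp [ha, hab], by simp⟩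

lemma wmax_pack (hw : w ≠ []) : wmax (pack w) = packRank w (wmax w) := by
  rw [pack_eq_map_packRank]
  refine le_antisymm (wmax_le ?_) (le_wmax (List.mem_map_of_mem (wmax_mem hw)))
  simp only [List.mem_map]
  rintro _ ⟨a, ha, rfl⟩
  exact packRank_mono (le_wmax ha)

lemma maxIndices_pack (w : List ℕ) : maxIndices (pack w) = maxIndices w := by
  rcases eq_or_ne w [] with rfl | hw
  · rfl
  ext j
  rw [mem_maxIndices, mem_maxIndices, wmax_pack hw, pack_eq_map_packRank, List.length_map]
  refine and_congr_right fun hj => ?_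
  rw [List.getD_eq_getElem _ _ (by simpa using hj), List.getElem_map,
    ← List.getD_eq_getElem _ 0 hj]
  refine ⟨fun h => ?_, congrArg _⟩
  by_contra hne
  exact (packRank_lt_packRank (getD_mem hj) ((le_wmax (getD_mem hj)).lt_of_ne hne)).ne h

end Pack

section Cuts

variable {w : List ℕ} {i : ℕ} {I : Finset ℕ}

lemma maxAt_pack_take_iff (h : okL w i) : maxAt (pack (w.take i)) I ↔ maxAt w I := by
  have hmax : wmax (w.take i ++ w.drop i) ∉ w.drop i := by
    rw [List.take_append_drop]; exact h.2.2.2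
  rw [maxAt_iff, maxAt_iff, maxIndices_pack, ← maxIndices_append_left hmax, List.take_append_drop]

lemma maxAt_iff_of_okR (h : okR w i) :
    maxAt w I ↔ (maxIndices (pack (w.drop i))).image (· + ((pack (w.take i)).length + 1)) = I := by
  have hmax : wmax (w.take i ++ w.drop i) ∉ w.take i := by
    rw [List.take_append_drop]; exact h.2.2.2
  have hsplit := maxIndices_append_right hmax
  rw [List.take_append_drop] at hsplit
  rw [maxAt_iff, hsplit, image_image, maxIndices_pack, pack_eq_map_packRank, List.length_map]
  simp only [Function.comp_def, add_assoc]

end Cuts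

lemma map_list_sum_eq_ite {M F : Type*} [AddCommMonoid M] [FunLike F M M]
    [AddMonoidHomClass F M M] (f : F) {l : List M} (p : Prop) [Decidable p]
    (h : ∀ x ∈ l, f x = if p then x else 0) : f l.sum = if p then l.sum else 0 := by
  rw [map_list_sum]
  split_ifs with hp
  · rw [List.map_congr_left (g := id) fun x hx => by simp [h x hx, hp], List.map_id]
  · exact List.sum_eq_zero fun y hy => by
      obtain ⟨x, hx, rfl⟩ := List.mem_map.mp hy
      rw [h x hx, if_neg hp]

lemma tauI_Rw (I : Finset ℕ) (w : List ℕ) : tauI I (Rw w) = if maxAt w I then Rw w else 0 := by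
  simp [tauI, Rw]

lemma deltaL_Rw (w : List ℕ) : deltaL (Rw w) = cutsL w := by
  simp [deltaL, Rw]

lemma deltaR_Rw (w : List ℕ) : deltaR (Rw w) = cutsR w := by
  simp [deltaR, Rw]

noncomputable def tensorBasis : Module.Basis (List ℕ × List ℕ) ℚ (V ⊗[ℚ] V) :=
  Finsupp.basisSingleOne.tensorProduct Finsupp.basisSingleOne

lemma tensorBasis_apply (u v : List ℕ) : tensorBasis (u, v) = Rw u ⊗ₜ Rw v := by
  simp [tensorBasis, Rw]

noncomputable def tauISuffix (I : Finset ℕ) : V ⊗[ℚ] V →ₗ[ℚ] V ⊗[ℚ] V :=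
  tensorBasis.constr ℚ fun p =>
    if (maxIndices p.2).image (· + (p.1.length + 1)) = I then tensorBasis p else 0

lemma tauISuffix_tmul (I : Finset ℕ) (u v : List ℕ) :
    tauISuffix I (Rw u ⊗ₜ Rw v) =
      if (maxIndices v).image (· + (u.length + 1)) = I then Rw u ⊗ₜ Rw v else 0 := by
  rw [← tensorBasis_apply, tauISuffix, Module.Basis.constr_basis]

lemma deltaL_comp_tauI (I : Finset ℕ) :
    deltaL ∘ₗ tauI I = TensorProduct.map (tauI I) LinearMap.id ∘ₗ deltaL := by
  refine Finsupp.basisSingleOne.ext fun w => ?_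
  change deltaL (tauI I (Rw w)) = TensorProduct.map (tauI I) LinearMap.id (deltaL (Rw w))
  rw [tauI_Rw, apply_ite deltaL, map_zero, deltaL_Rw, cutsL]
  refine (map_list_sum_eq_ite _ _ fun x hx => ?_).symm
  obtain ⟨i, hi, rfl⟩ := List.mem_map.mp hx
  have hcut : okL w i := by simpa using (List.mem_filter.mp hi).2
  rw [TensorProduct.map_tmul, tauI_Rw, maxAt_pack_take_iff hcut, TensorProduct.ite_tmul,
    LinearMap.id_apply]

lemma deltaR_comp_tauI (I : Finset ℕ) : deltaR ∘ₗ tauI I = tauISuffix I ∘ₗ deltaR := by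
  refine Finsupp.basisSingleOne.ext fun w => ?_
  change deltaR (tauI I (Rw w)) = tauISuffix I (deltaR (Rw w))
  rw [tauI_Rw, apply_ite deltaR, map_zero, deltaR_Rw, cutsR]
  refine (map_list_sum_eq_ite _ _ fun x hx => ?_).symm
  obtain ⟨i, hi, rfl⟩ := List.mem_map.mp hx
  have hcut : okR w i := by simpa using (List.mem_filter.mp hi).2
  rw [tauISuffix_tmul]
  exact if_congr (maxAt_iff_of_okR hcut).symm rfl rfl

lemma Wplus_le_comap_tauI (I : Finset ℕ) : Wplus ≤ Wplus.comap (tauI I) := by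
  refine Submodule.span_le.mpr ?_
  rintro _ ⟨w, hw, hne, rfl⟩
  rw [SetLike.mem_coe, Submodule.mem_comap, tauI_Rw]
  split_ifs
  · exact Submodule.subset_span ⟨w, hw, hne, rfl⟩
  · exact Submodule.zero_mem _

theorem tauI_comm_deltaL_and_preserves_TPrim_general (I : Finset ℕ) :
    (∀ x ∈ Wplus, deltaL (tauI I x) =
      (TensorProduct.map (tauI I) LinearMap.id) (deltaL x)) ∧
    (∀ x ∈ TPrim, tauI I x ∈ TPrim) := by
  refine ⟨fun x _ => LinearMap.congr_fun (deltaL_comp_tauI I) x, ?_⟩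
  intro x hx
  simp only [TPrim, Submodule.mem_inf, LinearMap.mem_ker] at hx ⊢
  obtain ⟨⟨hW, hL⟩, hR⟩ := hx
  refine ⟨⟨Wplus_le_comap_tauI I hW, ?_⟩, ?_⟩
  · rw [← LinearMap.comp_apply, deltaL_comp_tauI, LinearMap.comp_apply, hL, map_zero]
  · rw [← LinearMap.comp_apply, deltaR_comp_tauI, LinearMap.comp_apply, hR, map_zero]

theorem tauI_comm_deltaL_and_preserves_TPrim (I : Finset ℕ) (hne : I.Nonempty)
    (hpos : ∀ i ∈ I, 0 < i) :
    (∀ x ∈ Wplus, deltaL (tauI I x) =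
      (TensorProduct.map (tauI I) LinearMap.id) (deltaL x)) ∧
    (∀ x ∈ TPrim, tauI I x ∈ TPrim) :=
  tauI_comm_deltaL_and_preserves_TPrim_general I
end
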